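/- arXiv:1310.8209 — 2 statements merged into one kernel-verified Lean document; each statement's English description precedes it below -/
import Mathlib

section
/- For every integrable function f on the circle T = [-π, π), the Riesz logarithmic means R_n(f) = (1/l_n) Σ_{k=0}^n S_k(f)/(k+1), where l_n = Σ_{k=0}^n 1/(k+1) and S_k(f) is the k-th partial sum of the Fourier series of f, satisfy ‖R_n(f)‖_{L¹(T)} ≤ C‖f‖_{L¹(T)} with an absolute constant C independent of n and f. -/
noncomputable section
open MeasureTheory Real Filter Set

/-- l_n = Σ_{k=0}^n 1/(k+1). -/
def logSum (n : ℕ) : ℝ := ∑ k ∈ Finset.range (n + 1), (1 : ℝ) / (k + 1)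

/-- Fourier coefficient of f on T = [-π, π). -/
def fourierCoef (f : ℝ → ℂ) (k : ℤ) : ℂ :=
  (1 / (2 * Real.pi)) *
    ∫ x in Set.Icc (-Real.pi) Real.pi, f x * Complex.exp (-Complex.I * (k : ℂ) * (x : ℂ))

/-- k-th partial sum of the Fourier series of f. -/
def partialSum (f : ℝ → ℂ) (k : ℕ) (x : ℝ) : ℂ :=
  ∑ j ∈ Finset.Icc (-(k : ℤ)) (k : ℤ),
    fourierCoef f j * Complex.exp (Complex.I * (j : ℂ) * (x : ℂ))

/-- Riesz logarithmic mean R_n(f). -/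
def rieszMean (f : ℝ → ℂ) (n : ℕ) (x : ℝ) : ℂ :=
  (1 / (logSum n : ℂ)) * ∑ k ∈ Finset.range (n + 1), partialSum f k x / ((k : ℂ) + 1)

/-! With `D_k` the Dirichlet kernel, `R_n f` is the convolution of `f` with the kernel
`(2π l_n)⁻¹ G_n`, `G_n = Σ_{k ≤ n} D_k / (k + 1)`. Summation by parts writes `G_n` as a combination
with positive coefficients of the sums `Σ_{j ≤ k} D_j`, and by Fejér's identity these equal
`|Σ_{j ≤ k} e^{iju}|² ≥ 0`. So `G_n ≥ 0`, its `L¹` norm over a period is its integral `2π l_n`, and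
Tonelli gives `‖R_n f‖₁ ≤ ‖f‖₁`, i.e. the theorem with `C = 1`. -/

open ComplexConjugate

def fourierExp (j : ℤ) (u : ℝ) : ℂ := Complex.exp (Complex.I * j * u)

def dirichletKernel (k : ℕ) (u : ℝ) : ℂ := ∑ j ∈ Finset.Icc (-(k : ℤ)) k, fourierExp j u

/-- The kernel of `rieszMean f n`, up to the normalisation `2π l_n`. -/
def rieszKernel (n : ℕ) (u : ℝ) : ℂ := ∑ k ∈ Finset.range (n + 1), dirichletKernel k u / (k + 1)

lemma fourierExp_zero (u : ℝ) : fourierExp 0 u = 1 := by simp [fourierExp]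

lemma fourierExp_mul (a b : ℤ) (u : ℝ) :
    fourierExp a u * fourierExp b u = fourierExp (a + b) u := by
  simp only [fourierExp, ← Complex.exp_add]; push_cast; ring_nf

lemma conj_fourierExp (j : ℤ) (u : ℝ) : conj (fourierExp j u) = fourierExp (-j) u := by
  rw [fourierExp, ← Complex.exp_conj]; simp [fourierExp]

lemma fourierExp_mul_conj (j : ℤ) (u : ℝ) : fourierExp j u * conj (fourierExp j u) = 1 := by
  rw [conj_fourierExp, fourierExp_mul, add_neg_cancel, fourierExp_zero]

lemma fourierExp_sub (j : ℤ) (x t : ℝ) :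
    fourierExp j (x - t) = Complex.exp (-Complex.I * j * t) * fourierExp j x := by
  rw [fourierExp, fourierExp, ← Complex.exp_add]; push_cast; ring_nf

@[fun_prop]
lemma continuous_fourierExp (j : ℤ) : Continuous (fourierExp j) := by
  unfold fourierExp; fun_prop

lemma periodic_fourierExp (j : ℤ) : Function.Periodic (fourierExp j) (2 * π) := by
  intro u
  rw [fourierExp, fourierExp, show Complex.I * j * ↑(u + 2 * π) =
    Complex.I * j * u + j * (2 * π * Complex.I) by push_cast; ring,
    Complex.exp_add, Complex.exp_int_mul_two_pi_mul_I, mul_one]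

lemma integral_fourierExp (j : ℤ) :
    ∫ u in -π..π, fourierExp j u = if j = 0 then (2 * π : ℂ) else 0 := by
  split_ifs with hj
  · simp [hj, fourierExp_zero]; ring
  · have hc : Complex.I * j ≠ 0 := by simp [hj]
    have hperiod := periodic_fourierExp j (-π)
    rw [show -π + 2 * π = π by ring] at hperiod
    simp only [fourierExp] at hperiod ⊢
    rw [integral_exp_mul_complex hc, hperiod, sub_self, zero_div]

lemma dirichletKernel_succ (k : ℕ) (u : ℝ) :
    dirichletKernel (k + 1) u =
      dirichletKernel k u + fourierExp (k + 1) u + fourierExp (-(k + 1)) u := by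
  have hIcc : Finset.Icc (-((k : ℤ) + 1)) (k + 1) =
      insert (-((k : ℤ) + 1)) (insert ((k : ℤ) + 1) (Finset.Icc (-(k : ℤ)) k)) := by
    ext m; simp only [Finset.mem_Icc, Finset.mem_insert]; omega
  rw [dirichletKernel, dirichletKernel, Nat.cast_succ, hIcc, Finset.sum_insert (by simp; omega),
    Finset.sum_insert (by simp)]
  ring

lemma dirichletKernel_eq_one_add_add_conj (m : ℕ) (u : ℝ) :
    dirichletKernel m u = 1 + (∑ j ∈ Finset.range m, fourierExp (j + 1) u)
      + conj (∑ j ∈ Finset.range m, fourierExp (j + 1) u) := by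
  induction m with
  | zero => simp [dirichletKernel, fourierExp_zero]
  | succ m ih =>
    rw [dirichletKernel_succ, ih, Finset.sum_range_succ, map_add, conj_fourierExp]
    ring

lemma fourierExp_mul_conj_sum_range (n : ℕ) (u : ℝ) :
    fourierExp (n + 1) u * conj (∑ j ∈ Finset.range (n + 1), fourierExp j u)
      = ∑ j ∈ Finset.range (n + 1), fourierExp (j + 1) u := by
  rw [map_sum, Finset.mul_sum, ← Finset.sum_range_reflect _ (n + 1)]
  refine Finset.sum_congr rfl fun j hj => ?_
  rw [conj_fourierExp, fourierExp_mul]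
  congr 1
  have : j ≤ n := Nat.lt_succ_iff.mp (Finset.mem_range.mp hj)
  push_cast [Nat.add_sub_cancel, this]
  ring

lemma sum_range_dirichletKernel_eq_normSq (n : ℕ) (u : ℝ) :
    ∑ k ∈ Finset.range (n + 1), dirichletKernel k u =
      Complex.normSq (∑ j ∈ Finset.range (n + 1), fourierExp j u) := by
  induction n with
  | zero => simp [dirichletKernel, fourierExp_zero]
  | succ n ih =>
    rw [Finset.sum_range_succ, ih, Finset.sum_range_succ _ (n + 1),
      dirichletKernel_eq_one_add_add_conj, ← fourierExp_mul_conj_sum_range,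
      ← Complex.mul_conj, ← Complex.mul_conj]
    simp only [map_add, map_mul, Complex.conj_conj]
    push_cast
    linear_combination -(fourierExp_mul_conj ((n : ℤ) + 1) u)

lemma sum_range_div_succ_eq_by_parts {𝕜 : Type*} [Field 𝕜] [CharZero 𝕜] (a : ℕ → 𝕜) (n : ℕ) :
    ∑ k ∈ Finset.range (n + 1), a k / (k + 1) =
      (∑ j ∈ Finset.range (n + 1), a j) / (n + 1)
        + ∑ k ∈ Finset.range n, (∑ j ∈ Finset.range (k + 1), a j) / ((k + 1) * (k + 2)) := by
  induction n with
  | zero => simp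
  | succ n ih =>
    rw [Finset.sum_range_succ, ih,
      Finset.sum_range_succ (fun k => (∑ j ∈ Finset.range (k + 1), a j) / _),
      Finset.sum_range_succ a (n + 1)]
    have h1 : (n : 𝕜) + 1 ≠ 0 := Nat.cast_add_one_ne_zero n
    have h2 : (n : 𝕜) + 2 ≠ 0 := by exact_mod_cast Nat.succ_ne_zero (n + 1)
    push_cast
    rw [show (n : 𝕜) + 1 + 1 = n + 2 by ring]
    field_simp
    ring

open ComplexOrder in
lemma rieszKernel_nonneg (n : ℕ) (u : ℝ) : 0 ≤ rieszKernel n u := by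
  rw [rieszKernel, sum_range_div_succ_eq_by_parts]
  simp_rw [sum_range_dirichletKernel_eq_normSq]
  norm_cast
  exact add_nonneg (div_nonneg (Complex.normSq_nonneg _) (Nat.cast_nonneg _))
    (Finset.sum_nonneg fun k _ => div_nonneg (Complex.normSq_nonneg _) (Nat.cast_nonneg _))

lemma norm_rieszKernel (n : ℕ) (u : ℝ) : ‖rieszKernel n u‖ = (rieszKernel n u).re :=
  (Complex.re_eq_norm.mpr (rieszKernel_nonneg n u)).symm

lemma logSum_pos (n : ℕ) : 0 < logSum n :=
  Finset.sum_pos (fun k _ => by positivity) ⟨0, by simp⟩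

@[fun_prop]
lemma continuous_dirichletKernel (k : ℕ) : Continuous (dirichletKernel k) := by
  unfold dirichletKernel; fun_prop

@[fun_prop]
lemma continuous_rieszKernel (n : ℕ) : Continuous (rieszKernel n) := by
  unfold rieszKernel; fun_prop

lemma periodic_rieszKernel (n : ℕ) : Function.Periodic (rieszKernel n) (2 * π) := fun u => by
  simp only [rieszKernel, dirichletKernel, periodic_fourierExp _ u]

lemma integral_dirichletKernel (k : ℕ) : ∫ u in -π..π, dirichletKernel k u = 2 * π := by
  simp only [dirichletKernel]
  rw [intervalIntegral.integral_finsetSum fun j _ =>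
    (continuous_fourierExp j).intervalIntegrable _ _]
  simp [integral_fourierExp]

lemma integral_rieszKernel (n : ℕ) : ∫ u in -π..π, rieszKernel n u = 2 * π * logSum n := by
  simp only [rieszKernel]
  rw [intervalIntegral.integral_finsetSum fun k _ =>
    (by fun_prop : Continuous _).intervalIntegrable _ _]
  simp only [intervalIntegral.integral_div, integral_dirichletKernel, logSum]
  push_cast
  rw [Finset.mul_sum]
  exact Finset.sum_congr rfl fun k _ => by ring

lemma Function.Periodic.setIntegral_Icc_comp_sub {E : Type*} [NormedAddCommGroup E]
    [NormedSpace ℝ E] {g : ℝ → E} (hg : g.Periodic (2 * π)) (t : ℝ) :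
    ∫ x in Icc (-π) π, g (x - t) = ∫ x in -π..π, g x := by
  rw [integral_Icc_eq_integral_Ioc, ← intervalIntegral.integral_of_le (by linarith [pi_pos]),
    intervalIntegral.integral_comp_sub_right, show π - t = (-π - t) + 2 * π by ring,
    hg.intervalIntegral_add_eq (-π - t) (-π), show -π + 2 * π = π by ring]

lemma integral_norm_rieszKernel_sub (n : ℕ) (t : ℝ) :
    ∫ x in Icc (-π) π, ‖rieszKernel n (x - t)‖ = 2 * π * logSum n := by
  rw [((periodic_rieszKernel n).comp norm).setIntegral_Icc_comp_sub
    (g := fun u => ‖rieszKernel n u‖)]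
  simp only [norm_rieszKernel, ← RCLike.re_to_complex]
  rw [intervalIntegral.intervalIntegral_re ((continuous_rieszKernel n).intervalIntegrable _ _)]
  simp [integral_rieszKernel]

lemma fourierCoef_mul_fourierExp (f : ℝ → ℂ) (j : ℤ) (x : ℝ) :
    fourierCoef f j * fourierExp j x =
      (2 * π : ℂ)⁻¹ * ∫ t in Icc (-π) π, f t * fourierExp j (x - t) := by
  simp only [fourierCoef, fourierExp_sub, ← mul_assoc, integral_mul_const]
  ring

lemma MeasureTheory.IntegrableOn.mul_comp_sub {f K : ℝ → ℂ} {s : Set ℝ} (hf : IntegrableOn f s)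
    (hs : IsCompact s) (hK : Continuous K) (x : ℝ) : IntegrableOn (fun t => f t * K (x - t)) s :=
  hf.mul_continuousOn (by fun_prop) hs

lemma partialSum_eq_integral {f : ℝ → ℂ} (hf : IntegrableOn f (Icc (-π) π)) (k : ℕ) (x : ℝ) :
    partialSum f k x = (2 * π : ℂ)⁻¹ * ∫ t in Icc (-π) π, f t * dirichletKernel k (x - t) := by
  refine (Finset.sum_congr rfl fun j _ => fourierCoef_mul_fourierExp f j x).trans ?_
  rw [← Finset.mul_sum, ← integral_finsetSum _ fun j _ =>
    hf.mul_comp_sub isCompact_Icc (continuous_fourierExp j) x]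
  simp only [dirichletKernel, Finset.mul_sum]

lemma rieszMean_eq_integral {f : ℝ → ℂ} (hf : IntegrableOn f (Icc (-π) π)) (n : ℕ) (x : ℝ) :
    rieszMean f n x =
      ((2 * π * logSum n : ℝ) : ℂ)⁻¹ * ∫ t in Icc (-π) π, f t * rieszKernel n (x - t) := by
  simp only [rieszMean, partialSum_eq_integral hf, mul_div_assoc, ← integral_div, ← Finset.mul_sum]
  rw [← integral_finsetSum _ fun k _ => hf.mul_comp_sub isCompact_Icc
    (by fun_prop : Continuous fun u => dirichletKernel k u / (k + 1)) x]
  simp only [rieszKernel, Finset.mul_sum]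
  push_cast
  ring

lemma integral_norm_integral_mul_le {X Y : Type*} [MeasurableSpace X] [MeasurableSpace Y]
    {μ : Measure X} {ν : Measure Y} [SFinite μ] [SFinite ν] {f : Y → ℂ} {K : X → Y → ℂ} {M : ℝ}
    (hf : Integrable f ν) (hK_meas : AEStronglyMeasurable (Function.uncurry K) (μ.prod ν))
    (hK_int : ∀ y, Integrable (K · y) μ) (hK : ∀ y, ∫ x, ‖K x y‖ ∂μ ≤ M) (hM : 0 ≤ M) :
    ∫ x, ‖∫ y, f y * K x y ∂ν‖ ∂μ ≤ M * ∫ y, ‖f y‖ ∂ν := by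
  have hfK : AEStronglyMeasurable (fun p : X × Y => f p.2 * K p.1 p.2) (μ.prod ν) :=
    hf.aestronglyMeasurable.comp_snd.mul hK_meas
  have hK' : ∀ y, ∫⁻ x, ‖K x y‖ₑ ∂μ ≤ ENNReal.ofReal M := fun y => by
    rw [← ofReal_integral_norm_eq_lintegral_enorm (hK_int y)]
    exact ENNReal.ofReal_le_ofReal (hK y)
  have hlint : ∫⁻ x, ‖∫ y, f y * K x y ∂ν‖ₑ ∂μ ≤ ENNReal.ofReal M * ∫⁻ y, ‖f y‖ₑ ∂ν :=
    calc ∫⁻ x, ‖∫ y, f y * K x y ∂ν‖ₑ ∂μ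
        ≤ ∫⁻ x, ∫⁻ y, ‖f y‖ₑ * ‖K x y‖ₑ ∂ν ∂μ := by
          gcongr with x
          simpa only [enorm_mul] using enorm_integral_le_lintegral_enorm (fun y => f y * K x y)
      _ = ∫⁻ y, ‖f y‖ₑ * ∫⁻ x, ‖K x y‖ₑ ∂μ ∂ν := by
          rw [lintegral_lintegral_swap
            (by simpa only [Function.uncurry_def, enorm_mul] using hfK.enorm)]
          simp only [lintegral_const_mul' _ _ enorm_ne_top]
      _ ≤ ∫⁻ y, ‖f y‖ₑ * ENNReal.ofReal M ∂ν := by gcongr with y; exact hK' y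
      _ = ENNReal.ofReal M * ∫⁻ y, ‖f y‖ₑ ∂ν := by
          rw [← lintegral_const_mul' _ _ ENNReal.ofReal_ne_top]; simp only [mul_comm]
  rw [integral_norm_eq_lintegral_enorm hfK.integral_prod_right',
    integral_norm_eq_lintegral_enorm hf.aestronglyMeasurable]
  calc _ ≤ (ENNReal.ofReal M * ∫⁻ y, ‖f y‖ₑ ∂ν).toReal :=
        ENNReal.toReal_mono (ENNReal.mul_ne_top ENNReal.ofReal_ne_top hf.2.ne) hlint
    _ = _ := by rw [ENNReal.toReal_mul, ENNReal.toReal_ofReal hM]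

theorem riesz_mean_L1_uniformly_bounded :
    ∃ C > 0, ∀ f : ℝ → ℂ, IntegrableOn f (Set.Icc (-Real.pi) Real.pi) →
      ∀ n : ℕ,
        (∫ x in Set.Icc (-Real.pi) Real.pi, ‖rieszMean f n x‖) ≤
          C * ∫ x in Set.Icc (-Real.pi) Real.pi, ‖f x‖ := by
  refine ⟨1, one_pos, fun f hf n => ?_⟩
  have hl : 0 < 2 * π * logSum n := by have := logSum_pos n; positivity
  have hconv := integral_norm_integral_mul_le (μ := volume.restrict (Icc (-π) π)) hf
    (K := fun x t => rieszKernel n (x - t)) (by fun_prop)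
    (fun t => ((continuous_rieszKernel n).comp (by fun_prop)).integrableOn_Icc)
    (fun t => (integral_norm_rieszKernel_sub n t).le) hl.le
  calc ∫ x in Icc (-π) π, ‖rieszMean f n x‖
      = (2 * π * logSum n)⁻¹ *
          ∫ x in Icc (-π) π, ‖∫ t in Icc (-π) π, f t * rieszKernel n (x - t)‖ := by
        simp only [rieszMean_eq_integral hf, norm_mul, norm_inv, Complex.norm_of_nonneg hl.le,
          integral_const_mul]
    _ ≤ (2 * π * logSum n)⁻¹ * (2 * π * logSum n * ∫ t in Icc (-π) π, ‖f t‖) := by gcongr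
    _ = 1 * ∫ x in Icc (-π) π, ‖f x‖ := by rw [one_mul, inv_mul_cancel_left₀ hl.ne']
end
end

section
/- Let Q be a Young function with limsup_{u→∞} u log^b(u)/Q(u) = ∞ for a fixed positive integer b. Then there exist a strictly increasing sequence u_k → ∞ and a monotonically increasing sequence of positive integers r_k such that 2^{2b r_k} ≤ u_k < 2^{2b(r_k+1)} and 2^{2 r_k b} r_k^b / Q(2^{2 r_k b}) → ∞ as k → ∞. -/
set_option maxHeartbeats 1000000
noncomputable section
open MeasureTheory Real Filter Set

theorem exists_sequences_from_limsup
    (b : ℕ) (hb : 1 ≤ b) (Q : ℝ → ℝ)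
    (hconv : ConvexOn ℝ Set.univ Q) (hcont : Continuous Q) (hQ0 : Q 0 = 0)
    (hinf : Tendsto (fun u => Q u / u) atTop atTop)
    (hzero : Tendsto (fun u => Q u / u) (nhdsWithin 0 (Set.Ioi 0)) (nhds 0))
    (hlimsup : ∀ M : ℝ, ∃ᶠ u in atTop, M < u * Real.log u ^ b / Q u) :
    ∃ (u : ℕ → ℝ) (r : ℕ → ℕ),
      StrictMono u ∧ Tendsto u atTop atTop ∧
      Monotone r ∧ (∀ k, 1 ≤ r k) ∧
      (∀ k, (2 : ℝ) ^ (2 * b * r k) ≤ u k ∧ u k < (2 : ℝ) ^ (2 * b * (r k + 1))) ∧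
      Tendsto (fun k => (2 : ℝ) ^ (2 * r k * b) * (r k : ℝ) ^ b / Q ((2 : ℝ) ^ (2 * r k * b)))
        atTop atTop := by
  -- Step 1: threshold u₀ ≥ 1 with x ≤ Q x for all x ≥ u₀
  obtain ⟨u₁, hu₁⟩ := eventually_atTop.mp (hinf.eventually_ge_atTop 1)
  set u₀ : ℝ := max u₁ 1 with hu₀def
  have hu₀1 : (1:ℝ) ≤ u₀ := le_max_right _ _
  have hQge : ∀ x, u₀ ≤ x → x ≤ Q x := by
    intro x hx
    have hx1 : (1:ℝ) ≤ x := le_trans hu₀1 hx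
    have h := hu₁ x (le_trans (le_max_left _ _) hx)
    have hx0 : (0:ℝ) < x := by linarith
    calc x = 1 * x := (one_mul x).symm
    _ ≤ (Q x / x) * x := by nlinarith
    _ = Q x := div_mul_cancel₀ _ (ne_of_gt hx0)
  -- slope monotonicity from convexity
  have hslope : ∀ {x y : ℝ}, 0 < x → x ≤ y → Q x / x ≤ Q y / y := by
    intro x y hx hxy
    have hy : 0 < y := lt_of_lt_of_le hx hxy
    have := hconv.secant_mono (a := 0) (x := x) (y := y) (mem_univ _) (mem_univ _)
      (mem_univ _) (ne_of_gt hx) (ne_of_gt hy) hxy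
    simpa [hQ0] using this
  -- constants
  set C : ℝ := ((4*b:ℝ) * Real.log 2)^b with hCdef
  have hlog2 : (0:ℝ) < Real.log 2 := Real.log_pos one_lt_two
  have hb0 : (0:ℝ) < (b:ℝ) := by exact_mod_cast hb
  have hC : 0 < C := by positivity
  set T : ℝ := 2 ^ (2*b) * u₀ with hTdef
  have hpow1 : (1:ℝ) ≤ 2 ^ (2*b) := one_le_pow₀ one_le_two
  have hT1 : (2:ℝ)^(2*b) ≤ T := by nlinarith
  have hTu₀ : u₀ ≤ T := by nlinarith
  -- choose the sequence u
  have key : ∀ (k : ℕ) (L : ℝ), ∃ x, max L T < x ∧ (k:ℝ) < x ∧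
      C * k < x * Real.log x ^ b / Q x := by
    intro k L
    obtain ⟨x, hx1, hx2⟩ :=
      (frequently_atTop.mp (hlimsup (C * k))) (max (max L T) (k:ℝ) + 1)
    refine ⟨x, ?_, ?_, hx2⟩
    · have := le_max_left (max L T) (k:ℝ); linarith
    · have := le_max_right (max L T) (k:ℝ); linarith
  choose f hf1 hf2 hf3 using key
  set u : ℕ → ℝ := fun k => Nat.rec (f 0 0) (fun k uk => f (k+1) uk) k with hudef
  have huT : ∀ k, T < u k := by
    intro k; cases k with
    | zero => exact lt_of_le_of_lt (le_max_right 0 T) (hf1 0 0)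
    | succ k => exact lt_of_le_of_lt (le_max_right _ _) (hf1 (k+1) (u k))
  have hukk : ∀ k : ℕ, (k:ℝ) < u k := by
    intro k; cases k with
    | zero => exact hf2 0 0
    | succ k => exact hf2 (k+1) (u k)
  have humono : StrictMono u :=
    strictMono_nat_of_lt_succ (fun k => lt_of_le_of_lt (le_max_left _ _) (hf1 (k+1) (u k)))
  have hubound : ∀ k : ℕ, C * k < u k * Real.log (u k) ^ b / Q (u k) := by
    intro k; cases k with
    | zero => exact hf3 0 0
    | succ k => exact hf3 (k+1) (u k)
  have hutend : Tendsto u atTop atTop :=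
    tendsto_atTop_mono (fun k => (hukk k).le) tendsto_natCast_atTop_atTop
  have hu1 : ∀ k, 1 < u k := fun k => by nlinarith [huT k, hu₀1, hTu₀]
  have hupos : ∀ k, (0:ℝ) < u k := fun k => lt_trans one_pos (hu1 k)
  -- define r
  set r : ℕ → ℕ := fun k => ⌊Real.logb 2 (u k)⌋₊ / (2*b) with hrdef
  have h2b0 : 0 < 2*b := by omega
  have hlogb_ge : ∀ k, ((2*b : ℕ) : ℝ) ≤ Real.logb 2 (u k) := by
    intro k
    rw [Real.le_logb_iff_rpow_le one_lt_two (hupos k), Real.rpow_natCast]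
    calc (2:ℝ)^(2*b) ≤ T := hT1
    _ ≤ u k := (huT k).le
  have hfloor_ge : ∀ k, 2*b ≤ ⌊Real.logb 2 (u k)⌋₊ := fun k => Nat.le_floor (hlogb_ge k)
  have hr1 : ∀ k, 1 ≤ r k := by
    intro k
    simp only [hrdef]
    exact (Nat.le_div_iff_mul_le h2b0).2 (by simpa using hfloor_ge k)
  have hrmono : Monotone r := by
    intro k l hkl
    apply Nat.div_le_div_right
    apply Nat.floor_le_floor
    exact Real.logb_le_logb_of_le one_lt_two (hupos k) (humono.monotone hkl)
  -- the sandwich bounds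
  have hlower : ∀ k, (2 : ℝ) ^ (2 * b * r k) ≤ u k := by
    intro k
    have h1 : 2 * b * r k ≤ ⌊Real.logb 2 (u k)⌋₊ := by
      simp only [hrdef]; exact Nat.mul_div_le _ _
    calc (2:ℝ) ^ (2*b*r k) ≤ (2:ℝ) ^ ⌊Real.logb 2 (u k)⌋₊ :=
          pow_le_pow_right₀ one_le_two h1
    _ ≤ u k := by
        have h2 : (⌊Real.logb 2 (u k)⌋₊ : ℝ) ≤ Real.logb 2 (u k) :=
          Nat.floor_le (le_trans (by positivity) (hlogb_ge k))
        have h3 := (Real.le_logb_iff_rpow_le one_lt_two (hupos k)).1 h2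
        rwa [Real.rpow_natCast] at h3
  have hupper : ∀ k, u k < (2 : ℝ) ^ (2 * b * (r k + 1)) := by
    intro k
    have h0 : ⌊Real.logb 2 (u k)⌋₊ / (2*b) < r k + 1 := Nat.lt_succ_of_le (le_of_eq rfl)
    have h1' := (Nat.div_lt_iff_lt_mul h2b0).1 h0
    have h1 : ⌊Real.logb 2 (u k)⌋₊ + 1 ≤ 2 * b * (r k + 1) := by
      calc ⌊Real.logb 2 (u k)⌋₊ + 1 ≤ (r k + 1) * (2*b) := h1'
      _ = 2*b*(r k + 1) := Nat.mul_comm _ _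
    have h2 : Real.logb 2 (u k) < (⌊Real.logb 2 (u k)⌋₊ : ℝ) + 1 := Nat.lt_floor_add_one _
    have h3 : u k < (2:ℝ) ^ (⌊Real.logb 2 (u k)⌋₊ + 1) := by
      have h4 := (Real.logb_lt_iff_lt_rpow one_lt_two (hupos k)).1
        (by exact_mod_cast h2 : Real.logb 2 (u k) < ((⌊Real.logb 2 (u k)⌋₊ + 1 : ℕ) : ℝ))
      rwa [Real.rpow_natCast] at h4
    exact lt_of_lt_of_le h3 (pow_le_pow_right₀ one_le_two h1)
  -- key estimate: k < 2^(2 r b) * r^b / Q (2^(2 r b))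
  have hmain : ∀ k : ℕ, (k:ℝ) <
      (2 : ℝ) ^ (2 * r k * b) * (r k : ℝ) ^ b / Q ((2 : ℝ) ^ (2 * r k * b)) := by
    intro k
    set v : ℝ := (2 : ℝ) ^ (2 * r k * b) with hvdef
    have hexp : 2 * r k * b = 2 * b * r k := by ring
    have hv_le : v ≤ u k := by rw [hvdef, hexp]; exact hlower k
    have hv_pos : (0:ℝ) < v := by positivity
    have hu_gt_u₀ : u₀ < u k := lt_of_le_of_lt hTu₀ (huT k)
    have hQu : u k ≤ Q (u k) := hQge _ hu_gt_u₀.le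
    have hQu_pos : 0 < Q (u k) := lt_of_lt_of_le (hupos k) hQu
    have hpow2b : (0:ℝ) < 2 ^ (2*b) := by positivity
    have hv_gt : u₀ ≤ v := by
      have heq : (2:ℝ) ^ (2*b*(r k + 1)) = v * 2 ^ (2*b) := by
        rw [hvdef, ← pow_add]; congr 1; ring
      have h1 : u k < v * 2 ^ (2*b) := heq ▸ hupper k
      nlinarith [huT k]
    have hQv : v ≤ Q v := hQge _ hv_gt
    have hQv_pos : 0 < Q v := lt_of_lt_of_le hv_pos hQv
    have hsl : Q v / v ≤ Q (u k) / u k := hslope hv_pos hv_le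
    have hsl' : u k * Q v ≤ v * Q (u k) := by
      rw [div_le_div_iff₀ hv_pos (hupos k)] at hsl
      linarith
    have hrk1 : (1:ℝ) ≤ (r k : ℝ) := by exact_mod_cast hr1 k
    have hrb : (0:ℝ) ≤ (r k : ℝ) ^ b := by positivity
    have hlogu : Real.log (u k) ≤ (4*b:ℝ) * Real.log 2 * (r k : ℝ) := by
      have h1 : Real.log (u k) < Real.log ((2:ℝ) ^ (2*b*(r k + 1))) :=
        Real.log_lt_log (hupos k) (hupper k)
      rw [Real.log_pow] at h1
      have h2 : ((2*b*(r k + 1) : ℕ) : ℝ) ≤ (4*b:ℝ) * (r k : ℝ) := by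
        push_cast
        nlinarith
      nlinarith
    have hlogu_pos : 0 ≤ Real.log (u k) := Real.log_nonneg (hu1 k).le
    have hlogpow : Real.log (u k) ^ b ≤ C * (r k : ℝ) ^ b := by
      calc Real.log (u k) ^ b ≤ ((4*b:ℝ) * Real.log 2 * (r k : ℝ)) ^ b :=
            pow_le_pow_left₀ hlogu_pos hlogu b
      _ = C * (r k : ℝ) ^ b := by rw [hCdef, mul_pow]
    -- chain the inequalities
    have hA : C * k * Q (u k) < u k * Real.log (u k) ^ b :=
      (lt_div_iff₀ hQu_pos).1 (hubound k)
    have hB : u k * Real.log (u k) ^ b ≤ u k * (C * (r k : ℝ) ^ b) :=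
      mul_le_mul_of_nonneg_left hlogpow (hupos k).le
    have hAB : C * ((k:ℝ) * Q (u k)) < C * (u k * (r k : ℝ) ^ b) := by
      linarith [hA.trans_le hB]
    have hkQ : (k:ℝ) * Q (u k) < u k * (r k : ℝ) ^ b := (mul_lt_mul_iff_right₀ hC).1 hAB
    have h3 : (k:ℝ) * Q (u k) * Q v < u k * (r k : ℝ) ^ b * Q v :=
      mul_lt_mul_of_pos_right hkQ hQv_pos
    have h4 : u k * (r k : ℝ) ^ b * Q v ≤ v * (r k : ℝ) ^ b * Q (u k) := by
      linarith [mul_le_mul_of_nonneg_right hsl' hrb]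
    have h5 : (k:ℝ) * Q v * Q (u k) < v * (r k : ℝ) ^ b * Q (u k) := by linarith
    have h6 : (k:ℝ) * Q v < v * (r k : ℝ) ^ b :=
      lt_of_mul_lt_mul_right h5 hQu_pos.le
    rw [lt_div_iff₀ hQv_pos]
    exact h6
  refine ⟨u, r, humono, hutend, hrmono, hr1, fun k => ⟨hlower k, hupper k⟩, ?_⟩
  exact tendsto_atTop_mono (fun k => (hmain k).le) tendsto_natCast_atTop_atTop
end
end
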